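/- Let R be a finite ring with identity such that 2 is a unit in R, and let M̄ be a maximal independent set of the unit graph of R/J(R) consisting entirely of units of R/J(R). Then any complete set M of representatives in R of the cosets in M̄ is a maximal independent set of the unit graph of R with |M| = |M̄|. -/

import Mathlib

open Pointwise

/-- The unit graph of a ring: distinct `x, y` adjacent iff `x + y` is a unit. -/
def unitGraph (R : Type*) [Ring R] : SimpleGraph R where
  Adj x y := x ≠ y ∧ IsUnit (x + y)
  symm := by
    constructor
    rintro x y ⟨h1, h2⟩
    exact ⟨h1.symm, by rwa [add_comm]⟩
  loopless := by constructor; rintro x ⟨h, _⟩; exact h rfl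

/-- The unitary Cayley graph of a ring: distinct `x, y` adjacent iff `x - y` is a unit. -/
def cayleyGraph (R : Type*) [Ring R] : SimpleGraph R where
  Adj x y := x ≠ y ∧ IsUnit (x - y)
  symm := by
    constructor
    rintro x y ⟨h1, h2⟩
    refine ⟨h1.symm, ?_⟩
    rw [← neg_sub]
    exact h2.neg
  loopless := by constructor; rintro x ⟨h, _⟩; exact h rfl

/-- A set of vertices is independent if no two of its elements are adjacent. -/
def IsIndepSet {V : Type*} (G : SimpleGraph V) (A : Set V) : Prop :=
  ∀ ⦃x⦄, x ∈ A → ∀ ⦃y⦄, y ∈ A → ¬ G.Adj x y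

/-- A maximal independent set. -/
def IsMaxIndepSet {V : Type*} (G : SimpleGraph V) (A : Set V) : Prop :=
  IsIndepSet G A ∧ ∀ B, IsIndepSet G B → A ⊆ B → A = B

/-- A graph is well-covered if all maximal independent sets have the same cardinality. -/
def WellCovered {V : Type*} (G : SimpleGraph V) : Prop :=
  ∀ A B : Set V, IsMaxIndepSet G A → IsMaxIndepSet G B → A.ncard = B.ncard

/-!
Since `ker π` lies in the Jacobson radical, `π` reflects units, so every adjacency needed in the
unit graph of `R` can be checked after applying `π`. An element `b ∉ M` is adjacent to some
`m ∈ M`: if `π b ∉ M̄` this is maximality of `M̄`; if `π b = π m`, then `π (b + m) = 2 * π m` is a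
unit because `2` and `π m` are.
-/

theorem isMaxIndepSet_iff {V : Type*} {G : SimpleGraph V} {A : Set V} :
    IsMaxIndepSet G A ↔ IsIndepSet G A ∧ ∀ v ∉ A, ∃ a ∈ A, G.Adj v a := by
  refine ⟨fun hA => ⟨hA.1, fun v hv => ?_⟩, fun ⟨hA, hadj⟩ => ⟨hA, fun B hB hAB => ?_⟩⟩
  · by_contra! hnot
    have hins : IsIndepSet G (insert v A) := by
      rintro x (rfl | hx) y (rfl | hy)
      · exact G.loopless.irrefl _
      · exact hnot y hy
      · exact fun h => hnot x hx h.symm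
      · exact hA.1 hx hy
    exact hv (hA.2 _ hins (Set.subset_insert v A) ▸ Set.mem_insert v A)
  · refine hAB.antisymm fun b hb => ?_
    by_contra hbA
    obtain ⟨a, ha, hba⟩ := hadj b hbA
    exact hB hb (hAB ha) hba

theorem IsIndepSet.of_image_unitGraph {R S : Type*} [Ring R] [Ring S] (f : R →+* S) {M : Set R}
    (hM : IsIndepSet (unitGraph S) (f '' M)) (hf : Set.InjOn f M) :
    IsIndepSet (unitGraph R) M := by
  rintro x hx y hy ⟨hne, hu⟩
  exact hM (Set.mem_image_of_mem f hx) (Set.mem_image_of_mem f hy)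
    ⟨fun h => hne (hf hx hy h), map_add f x y ▸ hu.map f⟩

/-- `Ideal.isUnit_of_sub_one_mem_jacobson_bot` is the same statement for commutative rings. -/
theorem isUnit_of_sub_one_mem_jacobson {R : Type*} [Ring R] {r : R}
    (h : r - 1 ∈ Ideal.jacobson (⊥ : Ideal R)) : IsUnit r := by
  obtain ⟨s, hs⟩ := Ideal.exists_mul_sub_mem_of_sub_one_mem_jacobson r h
  rw [Ideal.mem_bot, sub_eq_zero] at hs
  -- `s = 1 - s * (r - 1)` also has a left inverse `t`, and then `t = t * s * r = r`.
  have hs' : s - 1 ∈ Ideal.jacobson (⊥ : Ideal R) := by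
    have : s - 1 = -(s * (r - 1)) := by rw [mul_sub, hs, mul_one, neg_sub]
    exact this ▸ neg_mem (Ideal.mul_mem_left _ s h)
  obtain ⟨t, ht⟩ := Ideal.exists_mul_sub_mem_of_sub_one_mem_jacobson s hs'
  rw [Ideal.mem_bot, sub_eq_zero] at ht
  have htr : t = r := by rw [← mul_one t, ← hs, ← mul_assoc, ht, one_mul]
  exact ⟨⟨r, s, htr ▸ ht, hs⟩, rfl⟩

theorem isLocalHom_of_ker_le_jacobson {R S : Type*} [Ring R] [Ring S] {f : R →+* S}
    (hf : Function.Surjective f) (hker : RingHom.ker f ≤ Ideal.jacobson ⊥) : IsLocalHom f := by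
  refine ⟨fun x hx => ?_⟩
  obtain ⟨y, hy⟩ := hf ↑hx.unit⁻¹
  have hmem {a b : R} (hab : f a * f b = 1) : a * b - 1 ∈ Ideal.jacobson ⊥ :=
    hker (by rw [RingHom.mem_ker, map_sub, map_mul, hab, map_one, sub_self])
  obtain ⟨v, hv⟩ := isUnit_of_sub_one_mem_jacobson (hmem (a := x) (b := y) (by simp [hy]))
  obtain ⟨w, hw⟩ := isUnit_of_sub_one_mem_jacobson (hmem (a := y) (b := x) (by simp [hy]))
  have hleft : (↑w⁻¹ * y) * x = 1 := by rw [mul_assoc, ← hw, Units.inv_mul]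
  have hright : x * (y * ↑v⁻¹) = 1 := by rw [← mul_assoc, ← hv, Units.mul_inv]
  exact ⟨⟨x, _, hright, left_inv_eq_right_inv hleft hright ▸ hleft⟩, rfl⟩

theorem stmt_10_general {R : Type*} [Ring R] (h2 : IsUnit (2 : R))
    {S : Type*} [Ring S] (π : R →+* S) (hsurj : Function.Surjective π)
    (hker : RingHom.ker π = Ideal.jacobson (⊥ : Ideal R))
    (Mbar : Set S) (hMbar : IsMaxIndepSet (unitGraph S) Mbar)
    (hMu : ∀ m ∈ Mbar, IsUnit m)
    (M : Set R) (hrep : Set.InjOn π M) (himg : π '' M = Mbar) :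
    IsMaxIndepSet (unitGraph R) M ∧ M.ncard = Mbar.ncard := by
  have := isLocalHom_of_ker_le_jacobson hsurj hker.le
  subst himg
  obtain ⟨hMbar_indep, hMbar_adj⟩ := isMaxIndepSet_iff.1 hMbar
  refine ⟨isMaxIndepSet_iff.2 ⟨hMbar_indep.of_image_unitGraph π hrep, fun b hb => ?_⟩,
    hrep.ncard_image.symm⟩
  suffices ∃ m ∈ M, b ≠ m ∧ IsUnit (π (b + m)) by
    obtain ⟨m, hm, hne, hu⟩ := this
    exact ⟨m, hm, hne, hu.of_map⟩
  by_cases hπb : π b ∈ π '' M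
  · obtain ⟨m, hm, hπm⟩ := hπb
    refine ⟨m, hm, fun h => hb (h ▸ hm), ?_⟩
    rw [map_add, ← hπm, ← two_mul, ← map_ofNat π 2]
    exact (h2.map π).mul (hMu _ (Set.mem_image_of_mem π hm))
  · obtain ⟨_, ⟨m, hm, rfl⟩, hne, hu⟩ := hMbar_adj (π b) hπb
    exact ⟨m, hm, fun h => hne (h ▸ rfl), (map_add π b m).symm ▸ hu⟩

theorem stmt_10 {R : Type*} [Ring R] [Finite R] (h2 : IsUnit (2 : R))
    {S : Type*} [Ring S] (π : R →+* S) (hsurj : Function.Surjective π)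
    (hker : RingHom.ker π = Ideal.jacobson (⊥ : Ideal R))
    (Mbar : Set S) (hMbar : IsMaxIndepSet (unitGraph S) Mbar)
    (hMu : ∀ m ∈ Mbar, IsUnit m)
    (M : Set R) (hrep : Set.InjOn π M) (himg : π '' M = Mbar) :
    IsMaxIndepSet (unitGraph R) M ∧ M.ncard = Mbar.ncard :=
  stmt_10_general h2 π hsurj hker Mbar hMbar hMu M hrep himg
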